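/- arXiv:1908.09735 — 4 statements merged into one kernel-verified Lean document; each statement's English description precedes it below -/
import Mathlib

section
/- Suppose A_RC x_C = b_R, A_RC^T y_R = c_C, A_RC Δx_C = e_i, A_RC^T Δy_R = e_j, and the j-th component of Δx_C is nonzero. Define s = -(e_j^T x_C)/(e_j^T Δx_C) and t = -(e_i^T y_R)/(e_i^T Δy_R). Then the j-th component of x_C + s Δx_C is zero, the i-th component of y_R + t Δy_R is zero, and c_C^T (x_C + s Δx_C) = b_R^T (y_R + t Δy_R). -/
open Matrix

theorem stmt_4 {k : ℕ} (A : Matrix (Fin k) (Fin k) ℝ)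
    (b c x y dx dy : Fin k → ℝ) (i j : Fin k)
    (hx : A.mulVec x = b) (hy : Aᵀ.mulVec y = c)
    (hdx : A.mulVec dx = Pi.single i 1) (hdy : Aᵀ.mulVec dy = Pi.single j 1)
    (hne : dx j ≠ 0) :
    x j + (-(x j) / dx j) * dx j = 0 ∧
    y i + (-(y i) / dy i) * dy i = 0 ∧
    c ⬝ᵥ (x + (-(x j) / dx j) • dx) = b ⬝ᵥ (y + (-(y i) / dy i) • dy) := by
  have key : dy i = dx j := by
    have h1 : dy ⬝ᵥ A.mulVec dx = Aᵀ.mulVec dy ⬝ᵥ dx := by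
      rw [Matrix.dotProduct_mulVec, ← Matrix.mulVec_transpose]
    rw [hdx, hdy] at h1
    simpa using h1
  have hcx : c ⬝ᵥ x = b ⬝ᵥ y := by
    rw [← hx, ← hy, dotProduct_comm, Matrix.dotProduct_mulVec,
      Matrix.vecMul_transpose]
  have hcdx : c ⬝ᵥ dx = y i := by
    rw [← hy, dotProduct_comm, Matrix.dotProduct_mulVec,
      Matrix.vecMul_transpose, hdx, dotProduct_comm]
    simp
  have hbdy : b ⬝ᵥ dy = x j := by
    rw [← hx, dotProduct_comm, Matrix.dotProduct_mulVec,
      ← Matrix.mulVec_transpose, hdy, dotProduct_comm]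
    simp
  refine ⟨by field_simp; ring, by rw [key]; field_simp; ring, ?_⟩
  rw [dotProduct_add, dotProduct_add, dotProduct_smul, dotProduct_smul,
    hcx, hcdx, hbdy, key]
  simp only [smul_eq_mul]
  ring
end

section
/- Suppose M Δu + e Δα = e_i with e^T Δu = 0, and M^T Δv + e Δβ = e_j with e^T Δv = 0. Then the j-th component of Δu equals the i-th component of Δv. -/
open Matrix

theorem stmt_11 {k : ℕ} (M : Matrix (Fin k) (Fin k) ℝ)
    (du dv : Fin k → ℝ) (dα dβ : ℝ) (i j : Fin k)
    (hdu : M.mulVec du + dα • (fun _ => (1 : ℝ)) = Pi.single i 1)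
    (hdu0 : ∑ l, du l = 0)
    (hdv : Mᵀ.mulVec dv + dβ • (fun _ => (1 : ℝ)) = Pi.single j 1)
    (hdv0 : ∑ l, dv l = 0) :
    du j = dv i := by
  have h1 : du j = Pi.single j 1 ⬝ᵥ du := by
    simp [dotProduct, Pi.single_apply, mul_comm]
  have h2 : dv i = Pi.single i 1 ⬝ᵥ dv := by
    simp [dotProduct, Pi.single_apply, mul_comm]
  rw [h1, h2, ← hdu, ← hdv]
  have e1 : (Mᵀ.mulVec dv + dβ • (fun _ => (1 : ℝ))) ⬝ᵥ du
      = Mᵀ.mulVec dv ⬝ᵥ du + dβ * ∑ l, du l := by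
    simp [add_dotProduct, smul_dotProduct, dotProduct, Finset.mul_sum, add_mul, Finset.sum_add_distrib]
  have e2 : (M.mulVec du + dα • (fun _ => (1 : ℝ))) ⬝ᵥ dv
      = M.mulVec du ⬝ᵥ dv + dα * ∑ l, dv l := by
    simp [add_dotProduct, smul_dotProduct, dotProduct, Finset.mul_sum, add_mul, Finset.sum_add_distrib]
  rw [e1, e2, hdu0, hdv0]
  simp only [mul_zero, add_zero]
  rw [mulVec_transpose, dotProduct_comm (M *ᵥ du), dotProduct_mulVec]
end

section
/- Suppose the bordered systems M u + e α = 0, e^T u = 1, M^T v + e β = 0, e^T v = 1, M Δu + e Δα = e_i, e^T Δu = 0, M^T Δv + e Δβ = e_j, e^T Δv = 0 hold, and (Δu)_j ≠ 0. Define s = -u_j/(Δu)_j and t = -v_i/(Δv)_i. Then (u + s Δu)_j = 0, (v + t Δv)_i = 0, and α + s Δα = β + t Δβ. -/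
open Matrix

theorem stmt_12 {k : ℕ} (M : Matrix (Fin k) (Fin k) ℝ)
    (u v du dv : Fin k → ℝ) (α β dα dβ : ℝ) (i j : Fin k)
    (hu : M.mulVec u + α • (fun _ => (1 : ℝ)) = 0) (hu1 : ∑ l, u l = 1)
    (hv : Mᵀ.mulVec v + β • (fun _ => (1 : ℝ)) = 0) (hv1 : ∑ l, v l = 1)
    (hdu : M.mulVec du + dα • (fun _ => (1 : ℝ)) = Pi.single i 1)
    (hdu0 : ∑ l, du l = 0)
    (hdv : Mᵀ.mulVec dv + dβ • (fun _ => (1 : ℝ)) = Pi.single j 1)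
    (hdv0 : ∑ l, dv l = 0)
    (hne : du j ≠ 0) :
    u j + (-(u j) / du j) * du j = 0 ∧
    v i + (-(v i) / dv i) * dv i = 0 ∧
    α + (-(u j) / du j) * dα = β + (-(v i) / dv i) * dβ := by
  have hone : ∀ w : Fin k → ℝ, w ⬝ᵥ (fun _ => (1:ℝ)) = ∑ l, w l := by
    intro w; simp [dotProduct]
  have hone' : ∀ w : Fin k → ℝ, (fun _ => (1:ℝ)) ⬝ᵥ w = ∑ l, w l := by
    intro w; simp [dotProduct]
  have hMu : M.mulVec u = -(α • fun _ => (1:ℝ)) := eq_neg_of_add_eq_zero_left hu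
  have hMv : Mᵀ.mulVec v = -(β • fun _ => (1:ℝ)) := eq_neg_of_add_eq_zero_left hv
  have hMdu : M.mulVec du = Pi.single i 1 - dα • (fun _ => (1:ℝ)) := eq_sub_of_add_eq hdu
  have hMdv : Mᵀ.mulVec dv = Pi.single j 1 - dβ • (fun _ => (1:ℝ)) := eq_sub_of_add_eq hdv
  have hvMw : ∀ a b : Fin k → ℝ, a ⬝ᵥ M.mulVec b = (Mᵀ.mulVec a) ⬝ᵥ b := by
    intro a b
    rw [dotProduct_mulVec, ← vecMul_transpose, transpose_transpose]
  -- α = β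
  have hαβ : α = β := by
    have h1 : v ⬝ᵥ M.mulVec u = -α := by
      rw [hMu, dotProduct_neg, dotProduct_smul, hone, hv1]; simp
    have h2 : v ⬝ᵥ M.mulVec u = -β := by
      rw [hvMw, hMv, neg_dotProduct, smul_dotProduct, hone', hu1]; simp
    linarith
  -- dα = v i
  have hdα : dα = v i := by
    have h1 : v ⬝ᵥ M.mulVec du = v i - dα := by
      rw [hMdu, dotProduct_sub, dotProduct_smul, hone, hv1]
      simp [dotProduct, Pi.single_apply]
    have h2 : v ⬝ᵥ M.mulVec du = 0 := by
      rw [hvMw, hMv, neg_dotProduct, smul_dotProduct, hone', hdu0]; simp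
    linarith
  -- dβ = u j
  have hdβ : dβ = u j := by
    have h1 : u ⬝ᵥ Mᵀ.mulVec dv = u j - dβ := by
      rw [hMdv, dotProduct_sub, dotProduct_smul, hone, hu1]
      simp [dotProduct, Pi.single_apply]
    have h2 : u ⬝ᵥ Mᵀ.mulVec dv = 0 := by
      rw [show u ⬝ᵥ Mᵀ.mulVec dv = (M.mulVec u) ⬝ᵥ dv by
            rw [dotProduct_mulVec, ← mulVec_transpose, transpose_transpose],
          hMu, neg_dotProduct, smul_dotProduct, hone', hdv0]; simp
    linarith
  -- du j = dv i
  have hkey : du j = dv i := by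
    have h1 : du ⬝ᵥ Mᵀ.mulVec dv = du j - dβ * 0 := by
      rw [hMdv, dotProduct_sub, dotProduct_smul, hone, hdu0]
      simp [dotProduct, Pi.single_apply]
    have h2 : du ⬝ᵥ Mᵀ.mulVec dv = dv i - dα * 0 := by
      rw [show du ⬝ᵥ Mᵀ.mulVec dv = (M.mulVec du) ⬝ᵥ dv by
            rw [dotProduct_mulVec, ← mulVec_transpose, transpose_transpose],
          hMdu, sub_dotProduct, smul_dotProduct, hone', hdv0]
      simp [dotProduct, Pi.single_apply]
    simp at h1 h2
    linarith
  have hne' : dv i ≠ 0 := hkey ▸ hne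
  refine ⟨by field_simp; ring, by field_simp; ring, ?_⟩
  rw [hαβ, hdα, hdβ, ← hkey]
  field_simp
end

section
/- Let A be an invertible k×k matrix (k ≥ 2), x = A^{-1} b with x ≥ 0, y = (A^T)^{-1} c with y ≥ 0, and suppose y_i = 0 for some i. Then there exists an index j and a scalar s such that, with Δx = A^{-1} e_i: (x + s Δx)_j = 0, x + s Δx ≥ 0 componentwise, and (Δx)_j ≠ 0 (so the submatrix of A with row i and column j deleted is nonsingular). -/
open Matrix

theorem stmt_15 {k : ℕ} (hk : 1 ≤ k) (A : Matrix (Fin (k + 1)) (Fin (k + 1)) ℝ)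
    (hA : IsUnit A) (b c : Fin (k + 1) → ℝ) (i : Fin (k + 1))
    (x y : Fin (k + 1) → ℝ)
    (hx : x = A⁻¹.mulVec b) (hxnn : ∀ l, 0 ≤ x l)
    (hy : y = (Aᵀ)⁻¹.mulVec c) (hynn : ∀ l, 0 ≤ y l)
    (hyi : y i = 0) :
    ∃ (j : Fin (k + 1)) (s : ℝ),
      x j + s * (A⁻¹.mulVec (Pi.single i 1)) j = 0 ∧
      (∀ l, 0 ≤ x l + s * (A⁻¹.mulVec (Pi.single i 1)) l) ∧
      (A⁻¹.mulVec (Pi.single i 1)) j ≠ 0 := by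
  set d := A⁻¹.mulVec (Pi.single i 1) with hd
  have hdet : IsUnit A.det := (Matrix.isUnit_iff_isUnit_det A).mp hA
  -- d is not identically zero
  have hAd : A.mulVec d = Pi.single i 1 := by
    rw [hd, mulVec_mulVec, Matrix.mul_nonsing_inv _ hdet, one_mulVec]
  have hdne : ∃ j, d j ≠ 0 := by
    by_contra h
    push_neg at h
    have : d = 0 := funext h
    rw [this] at hAd
    have : (Pi.single i 1 : Fin (k+1) → ℝ) i = 0 := by
      rw [← hAd]; simp [Matrix.mulVec]
    simp at this
  obtain ⟨j0, hj0⟩ := hdne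
  -- minimize x l / |d l| over l with d l ≠ 0
  obtain ⟨j, hjmem, hjmin⟩ := Finset.exists_min_image
    (Finset.univ.filter (fun l => d l ≠ 0)) (fun l => x l / |d l|)
    ⟨j0, by simp [hj0]⟩
  have hdj : d j ≠ 0 := by simpa using hjmem
  refine ⟨j, -x j / d j, ?_, ?_, hdj⟩
  · field_simp; ring
  · intro l
    by_cases hdl : d l = 0
    · simp [hdl, hxnn l]
    · have hmin : x j / |d j| ≤ x l / |d l| := hjmin l (by simp [hdl])
      have habs : |(-x j / d j) * d l| ≤ x l := by
        rw [abs_mul, abs_div, abs_neg, abs_of_nonneg (hxnn j)]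
        calc x j / |d j| * |d l| ≤ x l / |d l| * |d l| := by
              apply mul_le_mul_of_nonneg_right hmin (abs_nonneg _)
          _ = x l := by field_simp
      have := neg_abs_le ((-x j / d j) * d l)
      linarith [habs, this]
end
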